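/- Let q ≥ 3 and ℓ ≥ 2 be integers, let G_{q,ℓ-1} be the De Bruijn graph over an alphabet of size q, and let E_H = {e_0, e_1, …, e_{q^{ℓ-1}-1}} be the edge set of a Hamiltonian cycle in G_{q,ℓ-1}. Then for every i ∈ {0,…,q^{ℓ-1}-1} there exists a directed cycle in G_{q,ℓ-1} that passes through e_i and does not pass through any e_j with j ≠ i. -/

import Mathlib

open Finset

abbrev Wd (q ℓ : ℕ) := Fin ℓ → Fin q

/-- source of the De Bruijn edge `w : Σ^ℓ` : its length-`(ℓ-1)` prefix. -/
def dbSrc {q ℓ : ℕ} (w : Wd q ℓ) : Wd q (ℓ - 1) :=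
  fun i => w ⟨i.1, by have := i.isLt; omega⟩

/-- destination of the De Bruijn edge `w : Σ^ℓ` : its length-`(ℓ-1)` suffix. -/
def dbDst {q ℓ : ℕ} (w : Wd q ℓ) : Wd q (ℓ - 1) :=
  fun i => w ⟨i.1 + 1, by have := i.isLt; omega⟩

/-- cyclic successor index -/
def nextIdx {m : ℕ} (i : Fin m) : Fin m := ⟨(i.1 + 1) % m, Nat.mod_lt _ i.pos⟩

/-- append a letter to a vertex, forming an edge out of it -/
def appW {q ℓ : ℕ} (x : Wd q (ℓ - 1)) (a : Fin q) : Wd q ℓ :=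
  fun j => if h : j.1 < ℓ - 1 then x ⟨j.1, h⟩ else a

/-- prepend a letter to a vertex, forming an edge into it -/
def preW {q ℓ : ℕ} (a : Fin q) (x : Wd q (ℓ - 1)) : Wd q ℓ :=
  fun j => if _ : j.1 = 0 then a else x ⟨j.1 - 1, by have := j.isLt; omega⟩

/-- left shift a word, appending a letter at the end -/
def shiftApp {q m : ℕ} (s : Fin m → Fin q) (a : Fin q) : Fin m → Fin q :=
  fun i => if h : i.1 + 1 < m then s ⟨i.1 + 1, h⟩ else a

lemma dbSrc_appW {q ℓ : ℕ} (x : Wd q (ℓ - 1)) (a : Fin q) : dbSrc (appW x a) = x := by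
  funext i
  show (if h : i.1 < ℓ - 1 then x ⟨i.1, h⟩ else a) = x i
  rw [dif_pos i.isLt]

lemma dbDst_appW {q ℓ : ℕ} (x : Wd q (ℓ - 1)) (a : Fin q) : dbDst (appW x a) = shiftApp x a :=
  rfl

lemma appW_last {q ℓ : ℕ} (x : Wd q (ℓ - 1)) (a : Fin q) (j : Fin ℓ) (hj : ¬ j.1 < ℓ - 1) :
    appW x a j = a := dif_neg hj

lemma eq_appW {q ℓ : ℕ} (hℓ : 1 ≤ ℓ) (w : Wd q ℓ) :
    w = appW (dbSrc w) (w ⟨ℓ - 1, by omega⟩) := by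
  funext j
  show w j = if h : j.1 < ℓ - 1 then dbSrc w ⟨j.1, h⟩ else w ⟨ℓ - 1, by omega⟩
  by_cases hj : j.1 < ℓ - 1
  · rw [dif_pos hj]; rfl
  · rw [dif_neg hj]
    exact congrArg w (Fin.ext (show j.1 = ℓ - 1 by have := j.isLt; omega))

lemma dbDst_preW {q ℓ : ℕ} (a : Fin q) (x : Wd q (ℓ - 1)) : dbDst (preW a x) = x := by
  funext i
  show (if _ : i.1 + 1 = 0 then a else x ⟨i.1 + 1 - 1, by have := i.isLt; omega⟩) = x i
  rw [dif_neg (Nat.succ_ne_zero _)]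
  exact congrArg x (Fin.ext (show i.1 + 1 - 1 = i.1 by omega))

lemma preW_zero {q ℓ : ℕ} (a : Fin q) (x : Wd q (ℓ - 1)) (j : Fin ℓ) (hj : j.1 = 0) :
    preW a x j = a := dif_pos hj

lemma eq_preW {q ℓ : ℕ} (hℓ : 1 ≤ ℓ) (w : Wd q ℓ) :
    w = preW (w ⟨0, by omega⟩) (dbDst w) := by
  funext j
  show w j = if _ : j.1 = 0 then w ⟨0, by omega⟩ else dbDst w ⟨j.1 - 1, by have := j.isLt; omega⟩
  by_cases hj : j.1 = 0
  · rw [dif_pos hj]; exact congrArg w (Fin.ext hj)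
  · rw [dif_neg hj]
    show w j = w ⟨j.1 - 1 + 1, _⟩
    exact congrArg w (Fin.ext (show j.1 = j.1 - 1 + 1 by omega))

lemma appW_last' {q ℓ : ℕ} (hℓ : 1 ≤ ℓ) (x : Wd q (ℓ - 1)) (a : Fin q) :
    appW x a ⟨ℓ - 1, by omega⟩ = a := dif_neg (lt_irrefl _)

lemma preW_zero' {q ℓ : ℕ} (hℓ : 1 ≤ ℓ) (a : Fin q) (x : Wd q (ℓ - 1)) :
    preW a x ⟨0, by omega⟩ = a := dif_pos rfl

lemma eqvGen_shiftApp (q : ℕ) (hq : 3 ≤ q) :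
    ∀ (m : ℕ) (bad : (Fin m → Fin q) → Fin q) (x y : Fin m → Fin q),
      Relation.EqvGen (fun s t => ∃ a, a ≠ bad s ∧ t = shiftApp s a) x y := by
  intro m
  induction m with
  | zero =>
    intro bad x y
    have hxy : x = y := funext fun i => i.elim0
    exact hxy ▸ Relation.EqvGen.refl x
  | succ m ih =>
    intro bad x y
    set r := fun s t : Fin (m + 1) → Fin q => ∃ a, a ≠ bad s ∧ t = shiftApp s a with hr
    have claim1 : ∀ s t : Fin (m + 1) → Fin q,
        (∀ j : Fin (m + 1), j.1 ≠ 0 → s j = t j) → Relation.EqvGen r s t := by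
      intro s t hst
      obtain ⟨a, ha⟩ : ∃ a : Fin q, a ∉ ({bad s, bad t} : Finset (Fin q)) := by
        by_contra hcon
        push_neg at hcon
        have h1 := Finset.card_le_card (fun a _ => hcon a :
          (Finset.univ : Finset (Fin q)) ⊆ {bad s, bad t})
        have h2 : ({bad s, bad t} : Finset (Fin q)).card ≤ 2 :=
          (Finset.card_insert_le _ _).trans (by simp)
        rw [Finset.card_univ, Fintype.card_fin] at h1
        omega
      simp only [Finset.mem_insert, Finset.mem_singleton, not_or] at ha
      have heq : shiftApp s a = shiftApp t a := by
        funext i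
        show (if h : i.1 + 1 < m + 1 then s ⟨i.1 + 1, h⟩ else a)
            = (if h : i.1 + 1 < m + 1 then t ⟨i.1 + 1, h⟩ else a)
        by_cases hi : i.1 + 1 < m + 1
        · rw [dif_pos hi, dif_pos hi]
          exact hst ⟨i.1 + 1, hi⟩ (Nat.succ_ne_zero _)
        · rw [dif_neg hi, dif_neg hi]
      refine Relation.EqvGen.trans _ (shiftApp s a) _
        (Relation.EqvGen.rel _ _ ⟨a, ha.1, rfl⟩) ?_
      rw [heq]
      exact Relation.EqvGen.symm _ _ (Relation.EqvGen.rel _ _ ⟨a, ha.2, rfl⟩)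
    set d : Fin q := ⟨0, by omega⟩ with hd
    set lf : (Fin m → Fin q) → Fin (m + 1) → Fin q :=
      fun s j => if _ : j.1 = 0 then d else s ⟨j.1 - 1, by have := j.isLt; omega⟩ with hlf
    set bad' : (Fin m → Fin q) → Fin q := fun s => bad (lf s) with hbad'
    have claim2 : ∀ s t : Fin m → Fin q, (∃ a, a ≠ bad' s ∧ t = shiftApp s a) →
        Relation.EqvGen r (lf s) (lf t) := by
      rintro s t ⟨a, ha, rfl⟩
      refine Relation.EqvGen.trans _ (shiftApp (lf s) a) _
        (Relation.EqvGen.rel _ _ ⟨a, ha, rfl⟩) ?_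
      refine Relation.EqvGen.symm _ _ (claim1 _ _ ?_)
      intro j hj
      show (if _ : j.1 = 0 then d else shiftApp s a ⟨j.1 - 1, by have := j.isLt; omega⟩)
          = (if h : j.1 + 1 < m + 1 then lf s ⟨j.1 + 1, h⟩ else a)
      rw [dif_neg hj]
      show (if h : j.1 - 1 + 1 < m then s ⟨j.1 - 1 + 1, h⟩ else a)
          = (if h : j.1 + 1 < m + 1 then lf s ⟨j.1 + 1, h⟩ else a)
      by_cases hjm : j.1 < m
      · rw [dif_pos (show j.1 - 1 + 1 < m by omega), dif_pos (show j.1 + 1 < m + 1 by omega)]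
        show s ⟨j.1 - 1 + 1, _⟩
            = (if _ : j.1 + 1 = 0 then d else s ⟨j.1 + 1 - 1, by omega⟩)
        rw [dif_neg (Nat.succ_ne_zero _)]
        exact congrArg s (Fin.ext (show j.1 - 1 + 1 = j.1 + 1 - 1 by omega))
      · rw [dif_neg (show ¬ (j.1 - 1 + 1 < m) by omega),
          dif_neg (show ¬ (j.1 + 1 < m + 1) by have := j.isLt; omega)]
    have main : ∀ s t : Fin m → Fin q, Relation.EqvGen r (lf s) (lf t) := by
      intro s t
      have h0 := ih bad' s t
      induction h0 with
      | rel a b hab => exact claim2 a b hab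
      | refl a => exact Relation.EqvGen.refl _
      | symm a b _ ih1 => exact Relation.EqvGen.symm _ _ ih1
      | trans a b c _ _ ih1 ih2 => exact Relation.EqvGen.trans _ _ _ ih1 ih2
    have htail : ∀ z : Fin (m + 1) → Fin q,
        Relation.EqvGen r z (lf (fun i : Fin m => z ⟨i.1 + 1, by have := i.isLt; omega⟩)) := by
      intro z
      apply claim1
      intro j hj
      show z j = if _ : j.1 = 0 then d else z ⟨j.1 - 1 + 1, by have := j.isLt; omega⟩
      rw [dif_neg hj]
      exact congrArg z (Fin.ext (show j.1 = j.1 - 1 + 1 by omega))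
    refine Relation.EqvGen.trans _ _ _ (htail x) (Relation.EqvGen.trans _ _ _ ?_
      (Relation.EqvGen.symm _ _ (htail y)))
    exact main (fun i => x ⟨i.1 + 1, by have := i.isLt; omega⟩)
      (fun i => y ⟨i.1 + 1, by have := i.isLt; omega⟩)

lemma exists_nodup_chain {α : Type*} {r : α → α → Prop} :
    ∀ (l : List α) (a : α), List.Chain r a l →
      ∃ l' : List α, List.Chain r a l' ∧ (a :: l').Nodup ∧
        (a :: l').getLast? = (a :: l).getLast? := by
  intro l
  induction l with
  | nil => exact fun a _ => ⟨[], List.Chain.nil, List.nodup_singleton a, rfl⟩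
  | cons b t ihb =>
    intro a hch
    rw [List.Chain, List.chain_cons] at hch
    obtain ⟨l₁, hc₁, hn₁, hl₁⟩ := ihb b hch.2
    by_cases hmem : a ∈ b :: l₁
    · obtain ⟨p, s, hps⟩ := List.append_of_mem hmem
      have hsuf : (a :: s) <:+ (b :: l₁) := ⟨p, hps.symm⟩
      refine ⟨s, ?_, ?_, ?_⟩
      · have hch' : List.Chain' r (b :: l₁) := hc₁
        exact hch'.suffix hsuf
      · exact hn₁.sublist hsuf.sublist
      · rw [List.getLast?_cons_cons]
        rw [← hl₁, hps, List.getLast?_append_of_ne_nil p (List.cons_ne_nil a s)]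
    · refine ⟨b :: l₁, List.chain_cons.2 ⟨hch.1, hc₁⟩, List.nodup_cons.2 ⟨hmem, hn₁⟩, ?_⟩
      rw [List.getLast?_cons_cons, List.getLast?_cons_cons, hl₁]

/-- the unique Hamiltonian-cycle edge leaving vertex `x` -/
noncomputable def wOut {q ℓ : ℕ} (h : Fin (q ^ (ℓ - 1)) → Wd q ℓ)
    (hham : Function.Bijective fun i => dbSrc (h i)) (x : Wd q (ℓ - 1)) : Wd q ℓ :=
  h ((Equiv.ofBijective _ hham).symm x)

lemma dbSrc_wOut {q ℓ : ℕ} (h : Fin (q ^ (ℓ - 1)) → Wd q ℓ)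
    (hham : Function.Bijective fun i => dbSrc (h i)) (x : Wd q (ℓ - 1)) :
    dbSrc (wOut h hham x) = x :=
  (Equiv.ofBijective _ hham).apply_symm_apply x

lemma wOut_unique {q ℓ : ℕ} (h : Fin (q ^ (ℓ - 1)) → Wd q ℓ)
    (hham : Function.Bijective fun i => dbSrc (h i)) {x : Wd q (ℓ - 1)}
    {j : Fin (q ^ (ℓ - 1))} (hj : dbSrc (h j) = x) : h j = wOut h hham x := by
  unfold wOut
  refine congrArg h ?_
  apply (Equiv.ofBijective _ hham).injective
  rw [Equiv.apply_symm_apply]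
  exact hj

/-- the unique Hamiltonian-cycle edge entering vertex `x` -/
noncomputable def wIn {q ℓ : ℕ} (h : Fin (q ^ (ℓ - 1)) → Wd q ℓ)
    (hbij : Function.Bijective fun i => dbDst (h i)) (x : Wd q (ℓ - 1)) : Wd q ℓ :=
  h ((Equiv.ofBijective _ hbij).symm x)

lemma dbDst_wIn {q ℓ : ℕ} (h : Fin (q ^ (ℓ - 1)) → Wd q ℓ)
    (hbij : Function.Bijective fun i => dbDst (h i)) (x : Wd q (ℓ - 1)) :
    dbDst (wIn h hbij x) = x :=
  (Equiv.ofBijective _ hbij).apply_symm_apply x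

lemma wIn_unique {q ℓ : ℕ} (h : Fin (q ^ (ℓ - 1)) → Wd q ℓ)
    (hbij : Function.Bijective fun i => dbDst (h i)) {x : Wd q (ℓ - 1)}
    {j : Fin (q ^ (ℓ - 1))} (hj : dbDst (h j) = x) : h j = wIn h hbij x := by
  unfold wIn
  refine congrArg h ?_
  apply (Equiv.ofBijective _ hbij).injective
  rw [Equiv.apply_symm_apply]
  exact hj

/-- one step along a non-Hamiltonian edge -/
def dbStep {q ℓ : ℕ} (h : Fin (q ^ (ℓ - 1)) → Wd q ℓ) (x y : Wd q (ℓ - 1)) : Prop :=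
  ∃ w : Wd q ℓ, w ∉ Set.range h ∧ dbSrc w = x ∧ dbDst w = y

/-- if `h` enumerates the edges of a Hamiltonian cycle in the De Bruijn graph
`G_{q,ℓ-1}` (`q ≥ 3`, `ℓ ≥ 2`), then for every `i` there is a directed cycle (a closed walk
with pairwise distinct edges) passing through `h i` and avoiding every `h j` with `j ≠ i`. -/
theorem stmt_5 (q ℓ : ℕ) (hq : 3 ≤ q) (hℓ : 2 ≤ ℓ)
    (h : Fin (q ^ (ℓ - 1)) → Wd q ℓ)
    (hcyc : ∀ i, dbDst (h i) = dbSrc (h (nextIdx i)))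
    (hham : Function.Bijective fun i => dbSrc (h i))
    (i : Fin (q ^ (ℓ - 1))) :
    ∃ (k : ℕ) (c : Fin k → Wd q ℓ),
      0 < k ∧
      Function.Injective c ∧
      (∀ j, dbDst (c j) = dbSrc (c (nextIdx j))) ∧
      (∃ j, c j = h i) ∧
      ∀ (j : Fin k) (i' : Fin (q ^ (ℓ - 1))), i' ≠ i → c j ≠ h i' := by
  classical
  have hN3 : 3 ≤ q ^ (ℓ - 1) := by
    calc 3 ≤ q := hq
    _ = q ^ 1 := (pow_one q).symm
    _ ≤ q ^ (ℓ - 1) := Nat.pow_le_pow_right (by omega) (by omega)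
  have hinj : Function.Injective h := fun a b hab => hham.injective (congrArg dbSrc hab)
  -- the forbidden last letter out of each vertex
  set bF : Wd q (ℓ - 1) → Fin q := fun x => wOut h hham x ⟨ℓ - 1, by omega⟩ with hbF
  have shift_step : ∀ x y : Wd q (ℓ - 1), (∃ a, a ≠ bF x ∧ y = shiftApp x a) →
      dbStep h x y := by
    rintro x y ⟨a, ha, rfl⟩
    refine ⟨appW x a, ?_, dbSrc_appW x a, dbDst_appW x a⟩
    rintro ⟨j, hj⟩
    apply ha
    have h1 : h j = wOut h hham x := wOut_unique h hham (by rw [hj, dbSrc_appW])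
    rw [hbF]
    dsimp only
    rw [← h1, hj]
    exact (appW_last' (by omega) x a).symm
  have total : ∀ x y : Wd q (ℓ - 1), Relation.EqvGen (dbStep h) x y := fun x y =>
    Relation.EqvGen.mono shift_step _ _ (eqvGen_shiftApp q hq (ℓ - 1) bF x y)
  -- in-degree bijectivity
  have hnext_inj : Function.Injective (nextIdx : Fin (q ^ (ℓ - 1)) → Fin (q ^ (ℓ - 1))) := by
    intro a b hab
    have h1 : (a.1 + 1) % q ^ (ℓ - 1) = (b.1 + 1) % q ^ (ℓ - 1) := congrArg Fin.val hab
    have ha1 := a.isLt; have hb1 := b.isLt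
    apply Fin.ext
    by_cases hA : a.1 + 1 = q ^ (ℓ - 1) <;> by_cases hB : b.1 + 1 = q ^ (ℓ - 1)
    · omega
    · rw [hA, Nat.mod_self, Nat.mod_eq_of_lt (by omega)] at h1; omega
    · rw [hB, Nat.mod_self, Nat.mod_eq_of_lt (by omega)] at h1; omega
    · rw [Nat.mod_eq_of_lt (by omega), Nat.mod_eq_of_lt (by omega)] at h1; omega
  have hdst_bij : Function.Bijective (fun j : Fin (q ^ (ℓ - 1)) => dbDst (h j)) := by
    have hcomp : (fun j : Fin (q ^ (ℓ - 1)) => dbDst (h j))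
        = (fun j => dbSrc (h j)) ∘ nextIdx := funext fun j => hcyc j
    rw [hcomp]
    exact hham.comp (Finite.injective_iff_bijective.mp hnext_inj)
  -- fibers of src and dst have q elements each
  have cardSrcFiber : ∀ x : Wd q (ℓ - 1),
      (Finset.univ.filter fun w : Wd q ℓ => dbSrc w = x).card = q := by
    intro x
    have happ_inj : Function.Injective (appW x) := by
      intro a b hab
      have hc := congrFun hab ⟨ℓ - 1, by omega⟩
      rwa [appW_last' (by omega) x a, appW_last' (by omega) x b] at hc
    have himg : (Finset.univ.filter fun w : Wd q ℓ => dbSrc w = x)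
        = Finset.image (appW x) Finset.univ := by
      ext w
      simp only [Finset.mem_filter, Finset.mem_univ, true_and, Finset.mem_image]
      constructor
      · intro hw
        exact ⟨w ⟨ℓ - 1, by omega⟩, by rw [← hw]; exact (eq_appW (by omega) w).symm⟩
      · rintro ⟨a, rfl⟩
        exact dbSrc_appW x a
    rw [himg, Finset.card_image_of_injective _ happ_inj, Finset.card_univ, Fintype.card_fin]
  have cardDstFiber : ∀ x : Wd q (ℓ - 1),
      (Finset.univ.filter fun w : Wd q ℓ => dbDst w = x).card = q := by
    intro x
    have hpre_inj : Function.Injective (fun a => preW a x) := by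
      intro a b hab
      have hc := congrFun hab ⟨0, by omega⟩
      dsimp only at hc
      rwa [preW_zero' (by omega) a x, preW_zero' (by omega) b x] at hc
    have himg : (Finset.univ.filter fun w : Wd q ℓ => dbDst w = x)
        = Finset.image (fun a => preW a x) Finset.univ := by
      ext w
      simp only [Finset.mem_filter, Finset.mem_univ, true_and, Finset.mem_image]
      constructor
      · intro hw
        exact ⟨w ⟨0, by omega⟩, by rw [← hw]; exact (eq_preW (by omega) w).symm⟩
      · rintro ⟨a, rfl⟩
        exact dbDst_preW a x
    rw [himg, Finset.card_image_of_injective _ hpre_inj, Finset.card_univ, Fintype.card_fin]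
  -- non-Hamiltonian fibers have q-1 elements each
  have cardNonSrc : ∀ x : Wd q (ℓ - 1),
      (Finset.univ.filter fun w : Wd q ℓ => w ∉ Set.range h ∧ dbSrc w = x).card = q - 1 := by
    intro x
    have hsplit : (Finset.univ.filter fun w : Wd q ℓ => w ∉ Set.range h ∧ dbSrc w = x)
        = (Finset.univ.filter fun w : Wd q ℓ => dbSrc w = x).erase (wOut h hham x) := by
      ext w
      simp only [Finset.mem_filter, Finset.mem_univ, true_and, Finset.mem_erase]
      constructor
      · rintro ⟨hnot, hsrc⟩
        refine ⟨?_, hsrc⟩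
        rintro rfl
        exact hnot ⟨_, rfl⟩
      · rintro ⟨hne, hsrc⟩
        refine ⟨?_, hsrc⟩
        rintro ⟨j, rfl⟩
        exact hne (wOut_unique h hham hsrc)
    rw [hsplit, Finset.card_erase_of_mem, cardSrcFiber]
    simp only [Finset.mem_filter, Finset.mem_univ, true_and]
    exact dbSrc_wOut h hham x
  have cardNonDst : ∀ x : Wd q (ℓ - 1),
      (Finset.univ.filter fun w : Wd q ℓ => w ∉ Set.range h ∧ dbDst w = x).card = q - 1 := by
    intro x
    have hsplit : (Finset.univ.filter fun w : Wd q ℓ => w ∉ Set.range h ∧ dbDst w = x)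
        = (Finset.univ.filter fun w : Wd q ℓ => dbDst w = x).erase (wIn h hdst_bij x) := by
      ext w
      simp only [Finset.mem_filter, Finset.mem_univ, true_and, Finset.mem_erase]
      constructor
      · rintro ⟨hnot, hdst⟩
        refine ⟨?_, hdst⟩
        rintro rfl
        exact hnot ⟨_, rfl⟩
      · rintro ⟨hne, hdst⟩
        refine ⟨?_, hdst⟩
        rintro ⟨j, rfl⟩
        exact hne (wIn_unique h hdst_bij hdst)
    rw [hsplit, Finset.card_erase_of_mem, cardDstFiber]
    simp only [Finset.mem_filter, Finset.mem_univ, true_and]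
    exact dbDst_wIn h hdst_bij x
  -- the reachable set from v
  set v : Wd q (ℓ - 1) := dbDst (h i) with hv
  set u : Wd q (ℓ - 1) := dbSrc (h i) with hu
  set R : Finset (Wd q (ℓ - 1)) :=
    Finset.univ.filter (fun y => Relation.ReflTransGen (dbStep h) v y) with hR
  have hmemR : ∀ y, y ∈ R ↔ Relation.ReflTransGen (dbStep h) v y := by
    intro y; rw [hR]; simp
  have cardHelper : ∀ (f : Wd q ℓ → Wd q (ℓ - 1)),
      (∀ x, (Finset.univ.filter fun w : Wd q ℓ => w ∉ Set.range h ∧ f w = x).card = q - 1) →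
      (Finset.univ.filter fun w : Wd q ℓ => w ∉ Set.range h ∧ f w ∈ R).card
        = R.card * (q - 1) := by
    intro f hf
    rw [Finset.card_eq_sum_card_fiberwise
      (f := f) (t := R) (fun w hw => (Finset.mem_filter.mp hw).2.2)]
    have hfib : ∀ x ∈ R, ((Finset.univ.filter fun w : Wd q ℓ => w ∉ Set.range h ∧ f w ∈ R).filter
        fun w => f w = x).card = q - 1 := by
      intro x hx
      rw [← hf x]
      congr 1
      ext w
      simp only [Finset.mem_filter, Finset.mem_univ, true_and]
      constructor
      · rintro ⟨⟨hn, _⟩, hfx⟩; exact ⟨hn, hfx⟩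
      · rintro ⟨hn, hfx⟩; exact ⟨⟨hn, hfx ▸ hx⟩, hfx⟩
    rw [Finset.sum_congr rfl hfib, Finset.sum_const, smul_eq_mul]
  have hsub : (Finset.univ.filter fun w : Wd q ℓ => w ∉ Set.range h ∧ dbSrc w ∈ R)
      ⊆ (Finset.univ.filter fun w : Wd q ℓ => w ∉ Set.range h ∧ dbDst w ∈ R) := by
    intro w hw
    simp only [Finset.mem_filter, Finset.mem_univ, true_and] at hw ⊢
    refine ⟨hw.1, ?_⟩
    exact (hmemR _).mpr (((hmemR _).mp hw.2).tail ⟨w, hw.1, rfl, rfl⟩)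
  have heqTT : (Finset.univ.filter fun w : Wd q ℓ => w ∉ Set.range h ∧ dbSrc w ∈ R)
      = (Finset.univ.filter fun w : Wd q ℓ => w ∉ Set.range h ∧ dbDst w ∈ R) :=
    Finset.eq_of_subset_of_card_le hsub
      (le_of_eq (by rw [cardHelper dbDst cardNonDst, cardHelper dbSrc cardNonSrc]))
  have hrev : ∀ x y, dbStep h x y → y ∈ R → x ∈ R := by
    rintro x y ⟨w, hw, rfl, rfl⟩ hy
    have hmem : w ∈ (Finset.univ.filter fun w : Wd q ℓ => w ∉ Set.range h ∧ dbDst w ∈ R) := by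
      simp only [Finset.mem_filter, Finset.mem_univ, true_and]; exact ⟨hw, hy⟩
    rw [← heqTT] at hmem
    exact (Finset.mem_filter.mp hmem).2.2
  have hinv : ∀ x y, Relation.EqvGen (dbStep h) x y → (x ∈ R ↔ y ∈ R) := by
    intro x y hxy
    induction hxy with
    | rel a b hab =>
      exact ⟨fun ha => (hmemR b).mpr (((hmemR a).mp ha).tail hab), fun hb => hrev a b hab hb⟩
    | refl a => exact Iff.rfl
    | symm a b _ ih1 => exact ih1.symm
    | trans a b c _ _ ih1 ih2 => exact ih1.trans ih2
  have hreach : Relation.ReflTransGen (dbStep h) v u :=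
    (hmemR u).mp ((hinv v u (total v u)).mp ((hmemR v).mpr Relation.ReflTransGen.refl))
  -- extract a vertex-disjoint path from v to u
  obtain ⟨l0, hl0c, hl0last⟩ := List.exists_isChain_cons_of_relationReflTransGen hreach
  obtain ⟨l, hlc, hlnodup, hllast?⟩ := exists_nodup_chain l0 v hl0c
  have hlast : (v :: l).getLast (List.cons_ne_nil _ _) = u := by
    have h1 : (v :: l0).getLast? = some u := by
      rw [List.getLast?_eq_getLast (List.cons_ne_nil _ _), hl0last]
    have h2 : (v :: l).getLast? = some u := by rw [hllast?]; exact h1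
    rw [List.getLast?_eq_getLast (List.cons_ne_nil _ _)] at h2
    exact Option.some_injective _ h2
  set L := v :: l with hL
  set k := L.length with hk
  have hk0 : 0 < k := by rw [hk, hL]; simp
  have hgetinj : Function.Injective L.get :=
    List.nodup_iff_injective_get.mp (by rw [hL]; exact hlnodup)
  have hchain' : List.Chain' (dbStep h) L := by rw [hL]; exact hlc
  have hstepm : ∀ (m : ℕ) (hm : m < k - 1), ∃ w : Wd q ℓ,
      w ∉ Set.range h ∧ dbSrc w = L.get ⟨m, by omega⟩ ∧ dbDst w = L.get ⟨m + 1, by omega⟩ :=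
    fun m hm => List.isChain_iff_getElem.mp hchain' m (by omega)
  choose W hWnot hWsrc hWdst using hstepm
  set W' : ℕ → Wd q ℓ := fun m => if hm : m < k - 1 then W m hm else h i with hW'def
  have hW' : ∀ (m : ℕ) (hm : m < k - 1), W' m ∉ Set.range h ∧
      dbSrc (W' m) = L.get ⟨m, by omega⟩ ∧ dbDst (W' m) = L.get ⟨m + 1, by omega⟩ := by
    intro m hm
    rw [hW'def]
    dsimp only
    rw [dif_pos hm]
    exact ⟨hWnot m hm, hWsrc m hm, hWdst m hm⟩
  have hget0 : L.get ⟨0, hk0⟩ = v := rfl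
  have hgetlast : ∀ (hlt : k - 1 < k), L.get ⟨k - 1, hlt⟩ = u := by
    intro hlt
    rw [← hlast]
    rw [List.get_eq_getElem, List.getLast_eq_getElem]
  have hnextv : ∀ j : Fin k, (nextIdx j).1 = if j.1 + 1 = k then 0 else j.1 + 1 := by
    intro j
    show (j.1 + 1) % k = _
    by_cases hj : j.1 + 1 = k
    · rw [if_pos hj, hj, Nat.mod_self]
    · rw [if_neg hj, Nat.mod_eq_of_lt (by have := j.isLt; omega)]
  let c : Fin k → Wd q ℓ := fun j => if hj : j.1 = 0 then h i else W' (j.1 - 1)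
  have hc0 : ∀ j : Fin k, j.1 = 0 → c j = h i := fun j hj => dif_pos hj
  have hcpos : ∀ j : Fin k, j.1 ≠ 0 → c j = W' (j.1 - 1) := fun j hj => dif_neg hj
  refine ⟨k, c, hk0, ?_, ?_, ⟨⟨0, hk0⟩, hc0 _ rfl⟩, ?_⟩
  · -- injectivity
    intro a b hab
    by_cases ha0 : a.1 = 0 <;> by_cases hb0 : b.1 = 0
    · exact Fin.ext (by omega)
    · exfalso
      rw [hc0 a ha0, hcpos b hb0] at hab
      exact (hW' (b.1 - 1) (by have := b.isLt; omega)).1 ⟨i, hab⟩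
    · exfalso
      rw [hc0 b hb0, hcpos a ha0] at hab
      exact (hW' (a.1 - 1) (by have := a.isLt; omega)).1 ⟨i, hab.symm⟩
    · rw [hcpos a ha0, hcpos b hb0] at hab
      have hss := congrArg dbSrc hab
      rw [(hW' (a.1 - 1) (by have := a.isLt; omega)).2.1,
        (hW' (b.1 - 1) (by have := b.isLt; omega)).2.1] at hss
      have hval : a.1 - 1 = b.1 - 1 := congrArg Fin.val (hgetinj hss)
      exact Fin.ext (by omega)
  · -- cycle condition
    intro j
    by_cases hj0 : j.1 = 0
    · rw [hc0 j hj0]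
      by_cases hk1 : k = 1
      · have hnv : (nextIdx j).1 = 0 := by rw [hnextv]; rw [if_pos (by omega)]
        rw [hc0 _ hnv]
        have h1 : u = v := by
          rw [← hget0, ← hgetlast (by omega)]
          exact congrArg L.get (Fin.ext (show k - 1 = 0 by omega))
        rw [← hv, ← hu]
        exact h1.symm
      · have hnv : (nextIdx j).1 = 1 := by rw [hnextv]; rw [if_neg (by omega)]; omega
        have hnn : (nextIdx j).1 ≠ 0 := by omega
        rw [hcpos _ hnn]
        rw [(hW' ((nextIdx j).1 - 1) (by have := (nextIdx j).isLt; omega)).2.1]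
        rw [← hv, ← hget0]
        exact congrArg L.get (Fin.ext (show (0 : ℕ) = (nextIdx j).1 - 1 by omega))
    · rw [hcpos j hj0]
      have hmlt : j.1 - 1 < k - 1 := by have := j.isLt; omega
      rw [(hW' (j.1 - 1) hmlt).2.2]
      by_cases hjl : j.1 + 1 = k
      · have hnv : (nextIdx j).1 = 0 := by rw [hnextv, if_pos hjl]
        rw [hc0 _ hnv, ← hu]
        rw [← hgetlast (by omega)]
        exact congrArg L.get (Fin.ext (show j.1 - 1 + 1 = k - 1 by omega))
      · have hnv : (nextIdx j).1 = j.1 + 1 := by rw [hnextv, if_neg hjl]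
        have hnn : (nextIdx j).1 ≠ 0 := by omega
        rw [hcpos _ hnn]
        have hmlt2 : (nextIdx j).1 - 1 < k - 1 := by have := j.isLt; omega
        rw [(hW' ((nextIdx j).1 - 1) hmlt2).2.1]
        exact congrArg L.get (Fin.ext (show j.1 - 1 + 1 = (nextIdx j).1 - 1 by omega))
  · -- avoidance
    intro j i' hne heq
    by_cases hj0 : j.1 = 0
    · rw [hc0 j hj0] at heq
      exact hne (hinj heq).symm
    · rw [hcpos j hj0] at heq
      exact (hW' (j.1 - 1) (by have := j.isLt; omega)).1 ⟨i', heq.symm⟩
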